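/- For real x and y, the bivariate Hermite–Konhauser polynomial satisfies the Mittag-Leffler representation H_n^{ϱ,υ}(x,y) = (2x)^n E_{ϱ+1,υ}^{(-n;-n;-n)}(-1/(4x²), y) for x ≠ 0, where H_n^{ϱ,υ}(x,y) := Σ_{s=0}^{⌊n/2⌋} Σ_{r=0}^{n-s} [(-1)^s (-n)_{2s} (-n)_{s+r} / ((-n)_s Γ(ϱ+1+υr) s! r!)] (2x)^{n-2s} y^{υr} and E_{ϱ,υ}^{(γ₁;γ₂;γ₃)}(x,y) := Σ_{s,r≥0} (γ₁)_{2s}(γ₂)_{s+r} x^s y^{υr} / ((γ₃)_s Γ(ϱ+υr) r! s!). -/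

import Mathlib

/-!
Since `(-n)_k = 0` for `k > n`, the double series defining `E` terminates: only `2s ≤ n` and
`s + r ≤ n` contribute, which is exactly the range of summation of `H_n`. Term by term the two sides
then agree, because `(2x)^n (-1/(4x²))^s = (-1)^s (2x)^(n-2s)` for `2s ≤ n`; the Gamma factors,
factorials and `(-n)_s` sit in the same denominators on both sides.
-/

/-- Pochhammer symbol (rising factorial) on ℝ. -/
noncomputable def poch (a : ℝ) (k : ℕ) : ℝ := ∏ i ∈ Finset.range k, (a + i)

/-- Bivariate Hermite–Konhauser polynomial. -/
noncomputable def HK (ϱ : ℝ) (υ n : ℕ) (x y : ℝ) : ℝ :=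
  ∑ s ∈ Finset.range (n / 2 + 1), ∑ r ∈ Finset.range (n - s + 1),
    (-1 : ℝ) ^ s * poch (-(n : ℝ)) (2 * s) * poch (-(n : ℝ)) (s + r) /
        (poch (-(n : ℝ)) s * Real.Gamma (ϱ + 1 + υ * r) * s.factorial * r.factorial) *
      (2 * x) ^ (n - 2 * s) * y ^ (υ * r)

/-- Bivariate Mittag-Leffler function E_{ϱ,υ}^{(γ₁;γ₂;γ₃)}(x,y). -/
noncomputable def HKML (ϱ : ℝ) (υ : ℕ) (γ₁ γ₂ γ₃ : ℝ) (x y : ℝ) : ℝ :=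
  ∑' s : ℕ, ∑' r : ℕ,
    poch γ₁ (2 * s) * poch γ₂ (s + r) * x ^ s * y ^ (υ * r) /
      (poch γ₃ s * Real.Gamma (ϱ + υ * r) * r.factorial * s.factorial)

open Finset

lemma poch_neg_natCast_eq_zero {n k : ℕ} (h : n < k) : poch (-(n : ℝ)) k = 0 :=
  prod_eq_zero (mem_range.mpr h) (by simp)

lemma pow_mul_neg_one_div_sq_pow {K : Type*} [Field K] {a : K} (ha : a ≠ 0) {n s : ℕ}
    (h : 2 * s ≤ n) : a ^ n * (-1 / a ^ 2) ^ s = (-1) ^ s * a ^ (n - 2 * s) := by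
  obtain ⟨k, rfl⟩ := Nat.exists_eq_add_of_le h
  rw [Nat.add_sub_cancel_left, pow_add, div_pow, ← pow_mul]
  field_simp

lemma HKML_neg_natCast_eq_sum (ϱ : ℝ) (υ m n : ℕ) (γ₃ z y : ℝ) :
    HKML ϱ υ (-(m : ℝ)) (-(n : ℝ)) γ₃ z y =
      ∑ s ∈ range (m / 2 + 1), ∑ r ∈ range (n - s + 1),
        poch (-(m : ℝ)) (2 * s) * poch (-(n : ℝ)) (s + r) * z ^ s * y ^ (υ * r) /
          (poch γ₃ s * Real.Gamma (ϱ + υ * r) * r.factorial * s.factorial) := by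
  rw [HKML, tsum_eq_sum fun s hs => ?_]
  · refine sum_congr rfl fun s _ => tsum_eq_sum fun r hr => ?_
    rw [poch_neg_natCast_eq_zero (k := s + r) (by rw [mem_range] at hr; omega)]
    simp
  · rw [poch_neg_natCast_eq_zero (k := 2 * s) (by rw [mem_range] at hs; omega)]
    simp

theorem stmt19_general (ϱ : ℝ) (υ : ℕ) (n : ℕ)
    (x y : ℝ) (hx : x ≠ 0) :
    HK ϱ υ n x y =
      (2 * x) ^ n * HKML (ϱ + 1) υ (-(n : ℝ)) (-(n : ℝ)) (-(n : ℝ))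
        (-1 / (4 * x ^ 2)) y := by
  rw [HKML_neg_natCast_eq_sum, HK, mul_sum]
  refine sum_congr rfl fun s hs => ?_
  rw [mul_sum]
  refine sum_congr rfl fun r _ => ?_
  have hpow : (2 * x) ^ n * (-1 / (4 * x ^ 2)) ^ s = (-1) ^ s * (2 * x) ^ (n - 2 * s) := by
    rw [← pow_mul_neg_one_div_sq_pow (mul_ne_zero two_ne_zero hx) (by rw [mem_range] at hs; omega)]
    ring
  rw [mul_div_assoc', ← mul_assoc, ← mul_assoc, mul_right_comm ((2 * x) ^ n), hpow]
  ring

theorem stmt19 (ϱ : ℝ) (hϱ : -1 < ϱ) (υ : ℕ) (hυ : 1 ≤ υ) (n : ℕ)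
    (x y : ℝ) (hx : x ≠ 0) :
    HK ϱ υ n x y =
      (2 * x) ^ n * HKML (ϱ + 1) υ (-(n : ℝ)) (-(n : ℝ)) (-(n : ℝ))
        (-1 / (4 * x ^ 2)) y :=
  stmt19_general ϱ υ n x y hx
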